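/- arXiv:2005.02462 — 5 statements merged into one kernel-verified Lean document; each statement's English description precedes it below -/
import Mathlib

section
/- The units u = 2cos(2π/15), 2cos(4π/15), 2cos(8π/15) of the ring of integers of Q(2cos(2π/15)) are multiplicatively independent: if u_1^k u_2^l u_3^m = 1 for integers k, l, m, then k = l = m = 0. -/
/-!
The embedding of `ℚ(ζ₁₅)` sending `ζ` to `ζ ^ 2` maps `2 cos (2π a / 15)` to `2 cos (2π · 2a / 15)`,
so it cycles `u₁ ↦ u₂ ↦ u₃ ↦ u₄ := 2 cos (16π / 15) ↦ u₁`, and a relation `u₁ ^ k u₂ ^ l u₃ ^ m = 1`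
has two conjugate relations. Taking `log |·|` turns the three relations into a linear system in
`(k, l, m)` whose matrix is strictly diagonally dominant: the diagonal entries are `log |u₃|` with
`|u₃| < 1 / 4`, while `|u₁|, |u₂|, |u₄| ∈ [1, 2]`. Hence `k = l = m = 0`.
-/

open Polynomial Real

theorem AlgHom.map_prod_aeval_zpow {R K L ι : Type*} [CommRing R] [Field K] [Field L]
    [Algebra R K] [Algebra R L] [Fintype ι] (ψ : K →ₐ[R] L) (x : K) (P : ι → R[X])
    (e : ι → ℤ) : ψ (∏ i, aeval x (P i) ^ e i) = ∏ i, aeval (ψ x) (P i) ^ e i := by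
  simp [map_prod, map_zpow₀, aeval_algHom_apply]

theorem IsPrimitiveRoot.prod_aeval_pow_zpow_eq_one {L ι : Type*} [Field L] [Algebra ℚ L]
    [Fintype ι] {n : ℕ} (hn : 0 < n) {ζ : L} (hζ : IsPrimitiveRoot ζ n) {j : ℕ}
    (hj : j.Coprime n) (P : ι → ℚ[X]) (e : ι → ℤ) (h : ∏ i, aeval ζ (P i) ^ e i = 1) :
    ∏ i, aeval (ζ ^ j) (P i) ^ e i = 1 := by
  have : Fact (Irreducible (cyclotomic n ℚ)) := ⟨cyclotomic.irreducible_rat hn⟩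
  have embed {μ : L} (hμ : IsPrimitiveRoot μ n) :
      ∃ ψ : AdjoinRoot (cyclotomic n ℚ) →ₐ[ℚ] L, ψ (AdjoinRoot.root _) = μ :=
    ⟨AdjoinRoot.liftAlgHom _ (Algebra.ofId ℚ L) μ <| by
      rw [← eval_map, map_cyclotomic]; exact hμ.isRoot_cyclotomic hn,
     AdjoinRoot.liftAlgHom_root ..⟩
  obtain ⟨ψ₁, hψ₁⟩ := embed hζ
  obtain ⟨ψⱼ, hψⱼ⟩ := embed (hζ.pow_of_coprime j hj)
  have hroot : ∏ i, aeval (AdjoinRoot.root _) (P i) ^ e i = 1 :=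
    ψ₁.toRingHom.injective <| by
      change ψ₁ _ = ψ₁ 1
      rw [ψ₁.map_prod_aeval_zpow, hψ₁, h, map_one]
  rw [← hψⱼ, ← ψⱼ.map_prod_aeval_zpow, hroot, map_one]

theorem two_cos_eq_exp_pow_add {n : ℕ} (hn : 0 < n) (b : ℕ) :
    ((2 * cos (2 * π * (b / n)) : ℝ) : ℂ) =
      Complex.exp (2 * π * Complex.I / n) ^ b +
        Complex.exp (2 * π * Complex.I / n) ^ (b * (n - 1)) := by
  set ζ := Complex.exp (2 * π * Complex.I / n)
  have hζ : ζ ^ n = 1 := (Complex.isPrimitiveRoot_exp n hn.ne').pow_eq_one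
  have hinv : ζ ^ (b * (n - 1)) = (ζ ^ b)⁻¹ := by
    refine eq_inv_of_mul_eq_one_left ?_
    rw [pow_mul, pow_sub_one_mul hn.ne', ← pow_mul, mul_comm, pow_mul, hζ, one_pow]
  rw [hinv, ← Complex.exp_nat_mul, ← Complex.exp_neg]
  push_cast
  rw [Complex.two_cos]
  congr 2 <;> ring

theorem prod_two_cos_zpow_eq_one {ι : Type*} [Fintype ι] {n : ℕ} (hn : 0 < n) {j : ℕ}
    (hj : j.Coprime n) (a : ι → ℕ) (e : ι → ℤ)
    (h : ∏ i, (2 * cos (2 * π * (a i / n))) ^ e i = 1) :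
    ∏ i, (2 * cos (2 * π * ((j * a i : ℕ) / n))) ^ e i = 1 := by
  set P : ι → ℚ[X] := fun i ↦ X ^ a i + X ^ (a i * (n - 1))
  have hP (k : ℕ) : ((∏ i, (2 * cos (2 * π * ((k * a i : ℕ) / n))) ^ e i : ℝ) : ℂ) =
      ∏ i, aeval (Complex.exp (2 * π * Complex.I / n) ^ k) (P i) ^ e i := by
    push_cast [← Nat.cast_mul, two_cos_eq_exp_pow_add hn, P]
    simp only [map_add, map_pow, aeval_X, ← pow_mul, Nat.mul_assoc]
  have hζ := Complex.isPrimitiveRoot_exp n hn.ne'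
  have h₁ : ∏ i, aeval (Complex.exp (2 * π * Complex.I / n)) (P i) ^ e i = 1 := by
    simpa using (hP 1).symm.trans (by simp [h])
  exact_mod_cast (hP j).trans (hζ.prod_aeval_pow_zpow_eq_one hn hj P e h₁)

theorem Matrix.det_ne_zero_of_abs_offDiag_le {n : Type*} [Fintype n] [DecidableEq n]
    (A : Matrix n n ℝ) {c : ℝ} (hoff : ∀ i j, i ≠ j → |A i j| ≤ c)
    (hdiag : ∀ i, (Fintype.card n - 1) * c < |A i i|) : A.det ≠ 0 := by
  refine det_ne_zero_of_sum_row_lt_diag fun i ↦ ?_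
  have : Nonempty n := ⟨i⟩
  calc ∑ j ∈ Finset.univ.erase i, ‖A i j‖
      ≤ (Finset.univ.erase i).card • c :=
        Finset.sum_le_card_nsmul _ _ _ fun j hj ↦ hoff i j (Finset.ne_of_mem_erase hj).symm
    _ = (Fintype.card n - 1) * c := by
        rw [Finset.card_erase_of_mem (Finset.mem_univ i), nsmul_eq_mul, Finset.card_univ,
          Nat.cast_pred Fintype.card_pos]
    _ < ‖A i i‖ := hdiag i

theorem abs_log_le_log_two {x : ℝ} (hx : |x| ∈ Set.Icc 1 2) : |log x| ≤ log 2 := by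
  rw [← log_abs x, abs_of_nonneg (log_nonneg hx.1)]
  exact log_le_log (by linarith [hx.1]) hx.2

theorem two_mul_log_two_lt_abs_log {x : ℝ} (hx : |x| ∈ Set.Ioo 0 (1 / 4)) :
    2 * log 2 < |log x| := by
  have : log |x| < -(2 * log 2) := by
    calc log |x| < log (1 / 4) := log_lt_log hx.1 hx.2
      _ = -(2 * log 2) := by
        rw [one_div, log_inv, show (4 : ℝ) = 2 ^ 2 by norm_num, log_pow]; push_cast; ring
  rw [← log_abs x, abs_of_neg (by linarith [log_pos one_lt_two])]
  linarith

theorem mul_log_add_mul_log_add_mul_log_eq_zero {a b c : ℝ} (ha : a ≠ 0) (hb : b ≠ 0)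
    (hc : c ≠ 0) {k l m : ℤ} (h : a ^ k * b ^ l * c ^ m = 1) :
    k * log a + l * log b + m * log c = 0 := by
  have := congrArg log h
  rwa [log_mul (by positivity) (by positivity), log_mul (by positivity) (by positivity),
    log_zpow, log_zpow, log_zpow, log_one] at this

open Matrix in
theorem eq_zero_of_cyclic_zpow_relations {u₁ u₂ u₃ u₄ : ℝ} (hu₁ : |u₁| ∈ Set.Icc 1 2)
    (hu₂ : |u₂| ∈ Set.Icc 1 2) (hu₃ : |u₃| ∈ Set.Ioo 0 (1 / 4)) (hu₄ : |u₄| ∈ Set.Icc 1 2)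
    {k l m : ℤ} (r₁ : u₁ ^ k * u₂ ^ l * u₃ ^ m = 1) (r₂ : u₂ ^ k * u₃ ^ l * u₄ ^ m = 1)
    (r₃ : u₃ ^ k * u₄ ^ l * u₁ ^ m = 1) : k = 0 ∧ l = 0 ∧ m = 0 := by
  have ne_zero {u : ℝ} (hu : |u| ∈ Set.Icc 1 2) : u ≠ 0 :=
    abs_pos.1 (zero_lt_one.trans_le hu.1)
  have hu₃' : u₃ ≠ 0 := abs_pos.1 hu₃.1
  have e₁ := mul_log_add_mul_log_add_mul_log_eq_zero (ne_zero hu₁) (ne_zero hu₂) hu₃' r₁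
  have e₂ := mul_log_add_mul_log_add_mul_log_eq_zero (ne_zero hu₂) hu₃' (ne_zero hu₄) r₂
  have e₃ := mul_log_add_mul_log_add_mul_log_eq_zero hu₃' (ne_zero hu₄) (ne_zero hu₁) r₃
  set A : Matrix (Fin 3) (Fin 3) ℝ := !![log u₃, log u₄, log u₁; log u₂, log u₃, log u₄;
    log u₁, log u₂, log u₃]
  have hdet : A.det ≠ 0 := by
    refine A.det_ne_zero_of_abs_offDiag_le (c := log 2) (fun i j hij ↦ ?_) fun i ↦ ?_
    · fin_cases i <;> fin_cases j <;> simp_all [A, abs_log_le_log_two]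
    · fin_cases i <;> norm_num [A, two_mul_log_two_lt_abs_log hu₃]
  have hker : A *ᵥ ![(k : ℝ), l, m] = 0 := by
    ext i; fin_cases i <;> simp [A, mulVec, dotProduct, Fin.sum_univ_three] <;> linarith
  simpa [funext_iff, Fin.forall_fin_succ] using eq_zero_of_mulVec_eq_zero hdet hker

theorem abs_two_cos_mem_Icc {θ : ℝ} (h₀ : 0 ≤ θ) (h : θ ≤ π / 3) :
    |2 * cos θ| ∈ Set.Icc 1 2 := by
  have hcos : 1 / 2 ≤ cos θ :=
    cos_pi_div_three ▸ cos_le_cos_of_nonneg_of_le_pi h₀ (by linarith [pi_pos]) h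
  rw [abs_mul, abs_two, abs_of_nonneg (by linarith)]
  exact ⟨by linarith, by linarith [cos_le_one θ]⟩

theorem abs_two_cos_mem_Ioo {θ : ℝ} (h₀ : π / 2 < θ) (h : θ < π / 2 + 1 / 8) :
    |2 * cos θ| ∈ Set.Ioo 0 (1 / 4) := by
  have hsin := sin_pos_of_pos_of_lt_pi (x := θ - π / 2) (by linarith) (by linarith [pi_gt_three])
  have hsin_lt := sin_lt (x := θ - π / 2) (by linarith)
  rw [show θ = θ - π / 2 + π / 2 by ring, cos_add_pi_div_two, mul_neg, abs_neg,
    abs_of_pos (by positivity)]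
  exact ⟨by positivity, by linarith⟩

theorem stmt_4 (u₁ u₂ u₃ : ℝ)
    (h₁ : u₁ = 2 * Real.cos (2 * Real.pi * (1 / 15)))
    (h₂ : u₂ = 2 * Real.cos (2 * Real.pi * (2 / 15)))
    (h₃ : u₃ = 2 * Real.cos (2 * Real.pi * (4 / 15)))
    (k l m : ℤ) (h : u₁ ^ k * u₂ ^ l * u₃ ^ m = 1) :
    k = 0 ∧ l = 0 ∧ m = 0 := by
  have hconj (j : ℕ) (hj : j.Coprime 15) := prod_two_cos_zpow_eq_one (by norm_num) hj ![1, 2, 4]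
    ![k, l, m] (by simpa [Fin.prod_univ_three, h₁, h₂, h₃] using h)
  have h₁₆ : 2 * cos (2 * π * (16 / 15)) = u₁ := by
    rw [h₁, show 2 * π * (16 / 15) = 2 * π * (1 / 15) + 2 * π by ring, cos_add_two_pi]
  have r₂ := hconj 2 (by norm_num)
  have r₃ := hconj 4 (by norm_num)
  simp only [Fin.prod_univ_three, Matrix.cons_val_zero, Matrix.cons_val_one,
    Matrix.cons_val_two, Matrix.tail_cons, Matrix.head_cons] at r₂ r₃
  norm_num [← h₁, ← h₂, ← h₃, h₁₆] at r₂ r₃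
  refine eq_zero_of_cyclic_zpow_relations ?_ ?_ ?_ ?_ h r₂ r₃
  · exact h₁ ▸ abs_two_cos_mem_Icc (by positivity) (by linarith [pi_pos])
  · exact h₂ ▸ abs_two_cos_mem_Icc (by positivity) (by linarith [pi_pos])
  · exact h₃ ▸ abs_two_cos_mem_Ioo (by linarith [pi_pos]) (by linarith [pi_lt_d2])
  · rw [show 2 * π * (8 / 15) = π / 15 + π by ring, cos_add_pi, mul_neg, abs_neg]
    exact abs_two_cos_mem_Icc (by positivity) (by linarith [pi_pos])
end

section
/- Let u_1, u_2, u_3, u_4 be the four distinct real roots of t^4 - t^3 - 4t^2 + 4t + 1 (namely 2cos(2πk/15) for k = 1,2,4,7) and let φ be the Vandermonde matrix with rows (1, u_j, u_j^2, u_j^3). Then φ·A_1·φ^{-1} = Diag(u_1^2, u_2^2, u_3^2, u_4^2), where A_1 = [[0,0,-1,-1],[0,0,-4,-5],[1,0,4,0],[0,1,1,5]]. -/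
/-!
Writing `x = 2 cos θ`, one has `2 cos 5θ + 1 = (x + 1)(x⁴ - x³ - 4x² + 4x + 1)`. For `θ = 2πk/15`
with `k` prime to `15`, `cos 5θ = cos (2πk/3) = -1/2` while `x ≠ -1`, so each `u j` is a root of
`q = t⁴ - t³ - 4t² + 4t + 1`. The matrix `A₁` represents multiplication by `t²` on `ℝ[t]/(q)` in the
basis `1, t, t², t³`, so every row `(1, u, u², u³)` of `φ` is a left eigenvector of `A₁` with
eigenvalue `u²`. The `u j` are distinct (cosine is injective on `[0, π]`), hence `φ` is invertible
and `φ A₁ φ⁻¹` is diagonal.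
-/

open Real Matrix

theorem Matrix.mul_mul_inv_eq_diagonal_of_vecMul_eq {n R : Type*} [Fintype n] [DecidableEq n]
    [CommRing R] {φ A : Matrix n n R} {d : n → R} (hφ : IsUnit φ.det)
    (h : ∀ i, φ i ᵥ* A = d i • φ i) : φ * A * φ⁻¹ = diagonal d := by
  have hrows : φ * A = diagonal d * φ := by
    ext i j
    rw [diagonal_mul]
    exact congrFun (h i) j
  rw [hrows, mul_nonsing_inv_cancel_right _ _ hφ]

theorem two_mul_cos_five_mul (θ : ℝ) :
    2 * cos (5 * θ) = (2 * cos θ) ^ 5 - 5 * (2 * cos θ) ^ 3 + 5 * (2 * cos θ) := by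
  rw [show 5 * θ = 2 * θ + 3 * θ by ring, cos_add, cos_two_mul, cos_three_mul, sin_two_mul,
    sin_three_mul]
  linear_combination (16 * cos θ * (sin θ ^ 2 + 1 - cos θ ^ 2) - 12 * cos θ) * sin_sq θ

theorem cos_two_pi_div_three : cos (2 * π / 3) = -1 / 2 := by
  rw [show 2 * π / 3 = π - π / 3 by ring, cos_pi_sub, cos_pi_div_three]
  norm_num

theorem cos_two_pi_mul_div_three {k : ℤ} (hk : ¬ 3 ∣ k) : cos (2 * π * (k / 3)) = -1 / 2 := by
  obtain ⟨m, hm | hm⟩ : ∃ m : ℤ, k = 3 * m + 1 ∨ k = 3 * m + 2 := ⟨k / 3, by omega⟩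
  · rw [hm, ← cos_two_pi_div_three, ← cos_add_int_mul_two_pi (2 * π / 3) m]
    push_cast; ring_nf
  · rw [hm, ← cos_two_pi_div_three, ← cos_neg (2 * π / 3),
      ← cos_add_int_mul_two_pi (-(2 * π / 3)) (m + 1)]
    push_cast; ring_nf

theorem two_cos_two_pi_mul_div_fifteen_ne_neg_one {k : ℤ} (hk : ¬ 5 ∣ k) :
    2 * cos (2 * π * (k / 15)) ≠ -1 := by
  intro h
  have hcos : cos (2 * π / 3) = cos (2 * π * (k / 15)) := by
    rw [cos_two_pi_div_three]; linarith
  obtain ⟨m, hm⟩ : ∃ m : ℤ, k = 15 * m + 5 ∨ k = 15 * m - 5 := by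
    obtain ⟨m, hm | hm⟩ := cos_eq_cos_iff.mp hcos
    · have hπ : π * k = π * (15 * m + 5) := by linear_combination (15 / 2) * hm
      exact ⟨m, Or.inl (by exact_mod_cast mul_left_cancel₀ pi_ne_zero hπ)⟩
    · have hπ : π * k = π * (15 * m - 5) := by linear_combination (15 / 2) * hm
      exact ⟨m, Or.inr (by exact_mod_cast mul_left_cancel₀ pi_ne_zero hπ)⟩
  omega

theorem two_cos_two_pi_mul_div_fifteen_root {k : ℤ} (h3 : ¬ 3 ∣ k) (h5 : ¬ 5 ∣ k) :
    let x := 2 * cos (2 * π * (k / 15))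
    x ^ 4 - x ^ 3 - 4 * x ^ 2 + 4 * x + 1 = 0 := by
  intro x
  have h5x : 2 * cos (5 * (2 * π * (k / 15))) = -1 := by
    rw [show 5 * (2 * π * (k / 15)) = 2 * π * (k / 3) by ring, cos_two_pi_mul_div_three h3]
    norm_num
  have hx : x + 1 ≠ 0 := fun h => two_cos_two_pi_mul_div_fifteen_ne_neg_one h5 (by linarith)
  rw [two_mul_cos_five_mul] at h5x
  apply (mul_eq_zero.mp _).resolve_left hx
  linear_combination h5x

theorem injOn_two_cos_two_pi_mul_div_fifteen :
    Set.InjOn (fun k : ℤ => 2 * cos (2 * π * (k / 15))) (Set.Icc 0 7) := by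
  intro k hk l hl h
  have hangle (n : ℤ) (hn : n ∈ Set.Icc 0 7) : 2 * π * (n / 15) ∈ Set.Icc 0 π := by
    obtain ⟨h0, h7⟩ : (0 : ℝ) ≤ n ∧ (n : ℝ) ≤ 7 := by exact_mod_cast hn
    constructor <;> nlinarith [pi_pos]
  have hkl := injOn_cos (hangle k hk) (hangle l hl) (by simpa using h)
  have hπ : π * k = π * l := by linear_combination (15 / 2) * hkl
  exact_mod_cast mul_left_cancel₀ pi_ne_zero hπ

theorem powers_vecMul_eq_sq_smul {x : ℝ} (hx : x ^ 4 - x ^ 3 - 4 * x ^ 2 + 4 * x + 1 = 0) :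
    (fun j : Fin 4 => x ^ (j : ℕ)) ᵥ* !![0,0,-1,-1; 0,0,-4,-5; 1,0,4,0; 0,1,1,5]
      = x ^ 2 • fun j : Fin 4 => x ^ (j : ℕ) := by
  ext j
  fin_cases j <;>
    simp only [vecMul, dotProduct, Fin.sum_univ_four, Fin.isValue, Fin.zero_eta, Fin.mk_one,
      Fin.reduceFinMk, of_apply, cons_val', cons_val, cons_val_zero, cons_val_one, cons_val_fin_one,
      Fin.coe_ofNat_eq_mod, Nat.zero_mod, Nat.one_mod, Nat.reduceMod, Nat.mod_succ, pow_zero,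
      pow_one, mul_zero, mul_one, mul_neg, add_zero, zero_add, Pi.smul_apply, smul_eq_mul]
  · ring
  · linear_combination -hx
  · linear_combination -(x + 1) * hx

theorem stmt_6 (u : Fin 4 → ℝ)
    (hu : u = ![2 * Real.cos (2 * Real.pi * (1 / 15)),
                2 * Real.cos (2 * Real.pi * (2 / 15)),
                2 * Real.cos (2 * Real.pi * (4 / 15)),
                2 * Real.cos (2 * Real.pi * (7 / 15))])
    (φ : Matrix (Fin 4) (Fin 4) ℝ) (hφ : φ = Matrix.vandermonde u)
    (A₁ : Matrix (Fin 4) (Fin 4) ℝ)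
    (hA₁ : A₁ = !![0,0,-1,-1; 0,0,-4,-5; 1,0,4,0; 0,1,1,5]) :
    φ * A₁ * φ⁻¹ = Matrix.diagonal (fun j => (u j) ^ 2) := by
  let k : Fin 4 → ℤ := ![1, 2, 4, 7]
  have hu_k (j : Fin 4) : u j = 2 * cos (2 * π * (k j / 15)) := by
    fin_cases j <;> simp [hu, k]
  have hinj : Function.Injective u := by
    have hk_mem (j : Fin 4) : k j ∈ Set.Icc 0 7 := by fin_cases j <;> decide
    have hk : Function.Injective k := by decide
    intro i j h
    rw [hu_k, hu_k] at h
    exact hk (injOn_two_cos_two_pi_mul_div_fifteen (hk_mem i) (hk_mem j) h)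
  subst hφ hA₁
  refine mul_mul_inv_eq_diagonal_of_vecMul_eq (det_vandermonde_ne_zero_iff.mpr hinj).isUnit
    fun i => powers_vecMul_eq_sq_smul ?_
  rw [hu_k]
  exact two_cos_two_pi_mul_div_fifteen_root (by fin_cases i <;> decide) (by fin_cases i <;> decide)
end

section
/- Let u = √(2+√3). The real numbers u, 1+2u, and 1+u-2u^2-u^3 are multiplicatively independent: if u^k (1+2u)^l (1+u-2u^2-u^3)^m = 1 for integers k, l, m, then k = l = m = 0. -/
/-!
`u` is a root of `X⁴ - 4X² + 1`, which is irreducible over `ℚ` because its shift by one is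
Eisenstein at `2`. So a multiplicative relation between polynomial expressions in `u` persists at
the conjugates `-u⁻¹` and `u⁻¹`. Taking `log |·|` at `u`, `-u⁻¹`, `u⁻¹` gives three linear
equations in `k, l, m`, and the relative norm identities of the units `1 + 2u` and
`1 + u - 2u² - u³` make this system triangular, with nonzero diagonal entries
`log (1 + u - u⁻¹)`, `log (5 + 2(u + u⁻¹))` and `log u`.
-/

open Polynomial IntermediateField Real

noncomputable def quartic (R : Type*) [CommRing R] : R[X] := X ^ 4 - 4 * X ^ 2 + 1

theorem aeval_quartic {R A : Type*} [CommRing R] [CommRing A] [Algebra R A] (x : A) :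
    aeval x (quartic R) = x ^ 4 - 4 * x ^ 2 + 1 := by
  simp [quartic, map_ofNat]

theorem monic_quartic (R : Type*) [CommRing R] [Nontrivial R] : (quartic R).Monic := by
  unfold quartic; monicity!

theorem quartic_comp_X_add_one :
    (quartic ℤ).comp (X + 1) = X ^ 4 + C 4 * X ^ 3 + C 2 * X ^ 2 - C 4 * X - C 2 := by
  simp only [quartic, sub_comp, add_comp, mul_comp, pow_comp, X_comp, ofNat_comp, one_comp,
    map_ofNat]
  ring

theorem natDegree_quartic_comp_X_add_one : ((quartic ℤ).comp (X + 1)).natDegree = 4 := by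
  rw [quartic_comp_X_add_one]
  compute_degree!

theorem quartic_comp_X_add_one_isEisensteinAt :
    ((quartic ℤ).comp (X + 1)).IsEisensteinAt (Ideal.span {2}) := by
  refine ⟨?_, fun {n} hn => ?_, ?_⟩
  · rw [leadingCoeff, natDegree_quartic_comp_X_add_one, quartic_comp_X_add_one]
    simp [Ideal.mem_span_singleton, coeff_X]
  · rw [natDegree_quartic_comp_X_add_one] at hn
    rw [quartic_comp_X_add_one]
    interval_cases n <;> simp [Ideal.mem_span_singleton, coeff_X]
  · simp [quartic_comp_X_add_one, Ideal.span_singleton_pow, Ideal.mem_span_singleton, coeff_X]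

theorem irreducible_quartic : Irreducible (quartic ℚ) := by
  have hmonic : ((quartic ℤ).comp (X + 1)).Monic := by
    rw [quartic_comp_X_add_one]
    monicity!
  have hirr := quartic_comp_X_add_one_isEisensteinAt.irreducible
    ((Ideal.span_singleton_prime two_ne_zero).2 Int.prime_two) hmonic.isPrimitive
    (by rw [natDegree_quartic_comp_X_add_one]; norm_num)
  rwa [IsPrimitive.Int.irreducible_iff_irreducible_map_cast hmonic.isPrimitive, map_comp,
    show (quartic ℤ).map (Int.castRingHom ℚ) = quartic ℚ by simp [quartic],
    show (X + 1 : ℤ[X]).map (Int.castRingHom ℚ) = X + C 1 by simp, comp_eq_aeval,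
    ← algEquivAevalXAddC_apply, MulEquiv.irreducible_iff] at hirr

theorem aeval_sqrt_two_add_sqrt_three_quartic : aeval √(2 + √3) (quartic ℚ) = 0 := by
  have h3 : √3 ^ 2 = 3 := sq_sqrt (by norm_num)
  have hu : √(2 + √3) ^ 2 = 2 + √3 := sq_sqrt (by positivity)
  rw [aeval_quartic]
  linear_combination (√(2 + √3) ^ 2 - 2 + √3) * hu + h3

theorem minpoly_sqrt_two_add_sqrt_three : minpoly ℚ √(2 + √3) = quartic ℚ :=
  (minpoly.eq_of_irreducible_of_monic irreducible_quartic aeval_sqrt_two_add_sqrt_three_quartic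
    (monic_quartic ℚ)).symm

theorem prod_aeval_zpow_eq_one_of_aeval_minpoly_eq_zero {F K ι : Type*} [Field F] [Field K]
    [Algebra F K] {u x : K} (hu : IsIntegral F u) (hx : aeval x (minpoly F u) = 0)
    (s : Finset ι) (P : ι → F[X]) (e : ι → ℤ) (h : ∏ i ∈ s, aeval u (P i) ^ e i = 1) :
    ∏ i ∈ s, aeval x (P i) ^ e i = 1 := by
  have hmap (ψ : F⟮u⟯ →ₐ[F] K) : ∏ i ∈ s, aeval (ψ (AdjoinSimple.gen F u)) (P i) ^ e i
      = ψ (∏ i ∈ s, aeval (AdjoinSimple.gen F u) (P i) ^ e i) := by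
    simp only [map_prod, map_zpow₀, aeval_algHom_apply]
  have hgen : ∏ i ∈ s, aeval (AdjoinSimple.gen F u) (P i) ^ e i = 1 := by
    apply (F⟮u⟯).val.toRingHom.injective
    change (F⟮u⟯).val _ = (F⟮u⟯).val 1
    rw [← hmap, map_one]
    exact h
  have := hmap
    ((algHomAdjoinIntegralEquiv F hu).symm ⟨x, mem_aroots.2 ⟨minpoly.ne_zero hu, hx⟩⟩)
  rwa [algHomAdjoinIntegralEquiv_symm_apply_gen, hgen, map_one] at this

theorem log_add_log_of_mul_eq {a b c : ℝ} (h : a * b = c) (hc : c ≠ 0) :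
    log a + log b = log c := by
  rw [← h] at hc ⊢
  rw [log_mul (left_ne_zero_of_mul hc) (right_ne_zero_of_mul hc)]

theorem log_zpow_mul_zpow_mul_zpow {x y z : ℝ} {k l m : ℤ} (h : x ^ k * y ^ l * z ^ m = 1) :
    k * log x + l * log y + m * log z = 0 := by
  have hxy := left_ne_zero_of_mul_eq_one h
  rw [← log_zpow, ← log_zpow, ← log_zpow, log_add_log_of_mul_eq rfl hxy,
    log_add_log_of_mul_eq h one_ne_zero, log_one]

theorem eq_zero_of_mul_log_eq_zero {n : ℤ} {x : ℝ} (hx : 1 < x) (h : n * log x = 0) :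
    n = 0 := by
  exact_mod_cast (mul_eq_zero.1 h).resolve_right (log_pos hx).ne'

-- `Real.log` ignores signs, so this is `log |x ^ k * (1 + 2x) ^ l * (1 + x - 2x² - x³) ^ m|`.
noncomputable def relationLog (k l m : ℤ) (x : ℝ) : ℝ :=
  k * log x + l * log (1 + 2 * x) + m * log (1 + x - 2 * x ^ 2 - x ^ 3)

theorem eq_zero_of_relationLog_neg_inv {u : ℝ} (hu : 1 < u)
    (hroot : u ^ 4 - 4 * u ^ 2 + 1 = 0) {k l m : ℤ} (h₁ : relationLog k l m u = 0)
    (h₂ : relationLog k l m (-u⁻¹) = 0) : l = 0 := by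
  set y := u⁻¹
  have hy : u * y = 1 := mul_inv_cancel₀ (by positivity)
  -- The products are norms from `ℚ(u)` to `ℚ(√2)`, where `√2 = u - u⁻¹` and `1 + √2 > 1`.
  have hv : log (1 + u - 2 * u ^ 2 - u ^ 3) + log (1 + -y - 2 * (-y) ^ 2 - (-y) ^ 3) = 0 := by
    simpa using log_add_log_of_mul_eq
      (by grind : (1 + u - 2 * u ^ 2 - u ^ 3) * (1 + -y - 2 * (-y) ^ 2 - (-y) ^ 3) = -1)
      (by norm_num)
  have hw : log (1 + 2 * u) + log (1 + 2 * -y) + 2 * log (1 + u - y) = 0 := by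
    have hprod : (1 + 2 * u) * (1 + 2 * -y) * (1 + u - y) ^ 2 = -1 := by grind
    have hww : (1 + 2 * u) * (1 + 2 * -y) ≠ 0 :=
      left_ne_zero_of_mul (by rw [hprod]; norm_num)
    have := log_add_log_of_mul_eq hprod (by norm_num)
    rw [log_pow, log_neg_eq_log, log_one] at this
    rw [log_add_log_of_mul_eq rfl hww]
    exact_mod_cast this
  refine eq_zero_of_mul_log_eq_zero (x := 1 + u - y) ?_ ?_
  · linarith [inv_lt_one_of_one_lt₀ hu]
  · rw [relationLog, log_neg_eq_log, log_inv] at h₂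
    rw [relationLog] at h₁
    linear_combination (-1/2 : ℝ) * (h₁ + h₂) + (l / 2 : ℝ) * hw + (m / 2 : ℝ) * hv

theorem eq_zero_of_relationLog_inv {u : ℝ} (hu : 1 < u)
    (hroot : u ^ 4 - 4 * u ^ 2 + 1 = 0) {k m : ℤ} (h₁ : relationLog k 0 m u = 0)
    (h₃ : relationLog k 0 m u⁻¹ = 0) : m = 0 := by
  set y := u⁻¹
  have hy : u * y = 1 := mul_inv_cancel₀ (by positivity)
  have hy0 : 0 < y := by positivity
  have hpos : 0 < 5 + 2 * (u + y) := by positivity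
  -- A norm from `ℚ(u)` to `ℚ(√6)`, where `√6 = u + u⁻¹`.
  have hv := log_add_log_of_mul_eq
    (by grind : (1 + u - 2 * u ^ 2 - u ^ 3) * (1 + y - 2 * y ^ 2 - y ^ 3) = -(5 + 2 * (u + y)))
    (neg_ne_zero.2 hpos.ne')
  rw [log_neg_eq_log] at hv
  refine eq_zero_of_mul_log_eq_zero (x := 5 + 2 * (u + y)) (by linarith) ?_
  rw [relationLog, log_inv] at h₃
  rw [relationLog] at h₁
  linear_combination h₁ + h₃ - (m : ℝ) * hv

theorem eq_zero_of_forall_aeval_quartic_eq_zero {u : ℝ} (hu : 1 < u)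
    (hroot : aeval u (quartic ℚ) = 0) {k l m : ℤ}
    (h : ∀ x : ℝ, aeval x (quartic ℚ) = 0 →
      x ^ k * (1 + 2 * x) ^ l * (1 + x - 2 * x ^ 2 - x ^ 3) ^ m = 1) :
    k = 0 ∧ l = 0 ∧ m = 0 := by
  rw [aeval_quartic] at hroot
  have hu0 : u ≠ 0 := by positivity
  have hconj (x : ℝ) (hx : x ^ 4 - 4 * x ^ 2 + 1 = 0) : relationLog k l m x = 0 :=
    log_zpow_mul_zpow_mul_zpow (h x (by rwa [aeval_quartic]))
  have h₁ := hconj u hroot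
  obtain rfl := eq_zero_of_relationLog_neg_inv hu hroot h₁ (hconj _ (by grind))
  obtain rfl := eq_zero_of_relationLog_inv hu hroot h₁ (hconj _ (by grind))
  refine ⟨eq_zero_of_mul_log_eq_zero hu (by simpa [relationLog] using h₁), rfl, rfl⟩

theorem stmt_10 (u : ℝ) (hu : u = Real.sqrt (2 + Real.sqrt 3))
    (k l m : ℤ)
    (h : u ^ k * (1 + 2 * u) ^ l * (1 + u - 2 * u ^ 2 - u ^ 3) ^ m = 1) :
    k = 0 ∧ l = 0 ∧ m = 0 := by
  subst hu
  have hint : IsIntegral ℚ √(2 + √3) :=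
    ⟨_, monic_quartic ℚ, aeval_sqrt_two_add_sqrt_three_quartic⟩
  have hu1 : 1 < √(2 + √3) := (lt_sqrt zero_le_one).2 (by nlinarith [sqrt_nonneg 3])
  refine eq_zero_of_forall_aeval_quartic_eq_zero hu1 aeval_sqrt_two_add_sqrt_three_quartic
    fun x hx => ?_
  rw [← minpoly_sqrt_two_add_sqrt_three] at hx
  have key := prod_aeval_zpow_eq_one_of_aeval_minpoly_eq_zero hint hx Finset.univ
    ![X, 1 + 2 * X, 1 + X - 2 * X ^ 2 - X ^ 3] ![k, l, m]
  simp only [Fin.prod_univ_three, Matrix.cons_val_zero, Matrix.cons_val_one, Matrix.cons_val_two,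
    Matrix.head_cons, Matrix.tail_cons, map_add, map_sub, map_mul, map_pow, map_one, map_ofNat,
    aeval_X] at key
  exact key h
end

section
/- Let a, b, c : ℝ → ℝ solve the ODE system a' = 2(-a^2 - b^2 + c^2)a, b' = 2(-b^2 + a^2 - c^2)b, c' = 2(-c^2 - a^2 + b^2)c. Then the function N = a^2 + b^2 + c^2 satisfies N' ≤ 0 along any solution, with N' < 0 unless a = b = c = 0. -/
/-! Along the flow the cross terms of `N' = 2aa' + 2bb' + 2cc'` cancel in pairs, leaving
`N' = -4 (a⁴ + b⁴ + c⁴)`, which is negative unless `a = b = c = 0`. -/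

lemma deriv_sq_add_sq_add_sq {f g h : ℝ → ℝ} {t : ℝ} (hf : DifferentiableAt ℝ f t)
    (hg : DifferentiableAt ℝ g t) (hh : DifferentiableAt ℝ h t) :
    deriv (fun s => f s ^ 2 + g s ^ 2 + h s ^ 2) t =
      2 * f t * deriv f t + 2 * g t * deriv g t + 2 * h t * deriv h t := by
  have hsq {u : ℝ → ℝ} (hu : DifferentiableAt ℝ u t) :
      HasDerivAt (fun s => u s ^ 2) (2 * u t * deriv u t) t := by
    simpa [mul_comm] using hu.hasDerivAt.fun_pow 2
  exact (((hsq hf).add (hsq hg)).add (hsq hh)).deriv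

lemma pow_four_add_pow_four_add_pow_four_pos {x y z : ℝ} (h : ¬ (x = 0 ∧ y = 0 ∧ z = 0)) :
    0 < x ^ 4 + y ^ 4 + z ^ 4 := by
  have hx : 0 ≤ x ^ 4 := by positivity
  have hy : 0 ≤ y ^ 4 := by positivity
  have hz : 0 ≤ z ^ 4 := by positivity
  have hpos {w : ℝ} (hw : w ≠ 0) : 0 < w ^ 4 := by positivity
  rcases not_and_or.mp h with hx0 | hyz
  · linarith [hpos hx0]
  rcases not_and_or.mp hyz with hy0 | hz0
  · linarith [hpos hy0]
  · linarith [hpos hz0]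

theorem stmt_14 (a b c : ℝ → ℝ)
    (ha : Differentiable ℝ a) (hb : Differentiable ℝ b) (hc : Differentiable ℝ c)
    (ha' : ∀ t, deriv a t = 2 * (-(a t) ^ 2 - (b t) ^ 2 + (c t) ^ 2) * a t)
    (hb' : ∀ t, deriv b t = 2 * (-(b t) ^ 2 + (a t) ^ 2 - (c t) ^ 2) * b t)
    (hc' : ∀ t, deriv c t = 2 * (-(c t) ^ 2 - (a t) ^ 2 + (b t) ^ 2) * c t) :
    ∀ t, deriv (fun s => (a s) ^ 2 + (b s) ^ 2 + (c s) ^ 2) t ≤ 0 ∧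
      (¬ (a t = 0 ∧ b t = 0 ∧ c t = 0) →
        deriv (fun s => (a s) ^ 2 + (b s) ^ 2 + (c s) ^ 2) t < 0) := by
  intro t
  have hN : deriv (fun s => (a s) ^ 2 + (b s) ^ 2 + (c s) ^ 2) t
      = -4 * ((a t) ^ 4 + (b t) ^ 4 + (c t) ^ 4) := by
    rw [deriv_sq_add_sq_add_sq (ha t) (hb t) (hc t), ha' t, hb' t, hc' t]
    ring
  rw [hN]
  refine ⟨?_, fun h => ?_⟩
  · have : 0 ≤ (a t) ^ 4 + (b t) ^ 4 + (c t) ^ 4 := by positivity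
    linarith
  · linarith [pow_four_add_pow_four_add_pow_four_pos h]
end

section
/- Let a, b, c_1, c_2 : ℝ → ℝ solve a' = (-2a^2 + 2b^2 + 2c_1c_2)a, b' = (-2b^2 + 2a^2 - 2c_1c_2)b, c_i' = (-(c_1^2+c_2^2) - 2a^2 - 2b^2)c_i for i = 1,2. Then N = a^2 + b^2 + c_1^2 + c_2^2 is non-increasing, and strictly decreasing unless a^2 = b^2 and c_1 = c_2 = 0. -/
/-! With `x = a²`, `y = b²`, `s = c₁² + c₂²` one gets
`N' / 2 = -2 (x - y)² + 2 c₁c₂ (x - y) - s² - 2 (x + y) s`, and the cross term is absorbed by the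
last one since `|2 c₁c₂| ≤ s` and `|x - y| ≤ x + y`. Hence `N' ≤ -2 (2 (x - y)² + s²)`, which is
negative unless `x = y` and `s = 0`. -/

lemma deriv_sq_add_sq_add_sq_add_sq {f g h k : ℝ → ℝ} {t : ℝ} (hf : DifferentiableAt ℝ f t)
    (hg : DifferentiableAt ℝ g t) (hh : DifferentiableAt ℝ h t) (hk : DifferentiableAt ℝ k t) :
    deriv (fun s => f s ^ 2 + g s ^ 2 + h s ^ 2 + k s ^ 2) t
      = 2 * f t * deriv f t + 2 * g t * deriv g t + 2 * h t * deriv h t + 2 * k t * deriv k t := by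
  have hN : HasDerivAt (fun s => f s ^ 2 + g s ^ 2 + h s ^ 2 + k s ^ 2) _ t :=
    (((hf.hasDerivAt.pow 2).add (hg.hasDerivAt.pow 2)).add (hh.hasDerivAt.pow 2)).add
      (hk.hasDerivAt.pow 2)
  rw [hN.deriv]
  push_cast
  ring

lemma dissipation_le (a b u v : ℝ) :
    2 * a * ((-2 * a ^ 2 + 2 * b ^ 2 + 2 * u * v) * a)
      + 2 * b * ((-2 * b ^ 2 + 2 * a ^ 2 - 2 * u * v) * b)
      + 2 * u * ((-(u ^ 2 + v ^ 2) - 2 * a ^ 2 - 2 * b ^ 2) * u)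
      + 2 * v * ((-(u ^ 2 + v ^ 2) - 2 * a ^ 2 - 2 * b ^ 2) * v)
      ≤ -2 * (2 * (a ^ 2 - b ^ 2) ^ 2 + (u ^ 2 + v ^ 2) ^ 2) := by
  have hplus : 0 ≤ u ^ 2 + u * v + v ^ 2 := by nlinarith [sq_nonneg (u + v)]
  have hminus : 0 ≤ u ^ 2 - u * v + v ^ 2 := by nlinarith [sq_nonneg (u - v)]
  nlinarith [mul_nonneg (sq_nonneg a) hminus, mul_nonneg (sq_nonneg b) hplus,
    mul_nonneg (sq_nonneg a) (add_nonneg (sq_nonneg u) (sq_nonneg v)),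
    mul_nonneg (sq_nonneg b) (add_nonneg (sq_nonneg u) (sq_nonneg v))]

lemma eq_and_eq_zero_of_two_mul_sq_add_sq_sq_nonpos {x y u v : ℝ}
    (h : 2 * (x - y) ^ 2 + (u ^ 2 + v ^ 2) ^ 2 ≤ 0) : x = y ∧ u = 0 ∧ v = 0 := by
  have hxy : (x - y) ^ 2 = 0 := by nlinarith [sq_nonneg (x - y), sq_nonneg (u ^ 2 + v ^ 2)]
  have huv : u ^ 2 + v ^ 2 = 0 := by nlinarith [sq_nonneg (x - y), sq_nonneg (u ^ 2 + v ^ 2)]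
  refine ⟨sub_eq_zero.1 (pow_eq_zero_iff two_ne_zero |>.1 hxy), ?_, ?_⟩ <;>
    nlinarith [sq_nonneg u, sq_nonneg v]

theorem stmt_17 (a b c₁ c₂ : ℝ → ℝ)
    (ha : Differentiable ℝ a) (hb : Differentiable ℝ b)
    (hc₁ : Differentiable ℝ c₁) (hc₂ : Differentiable ℝ c₂)
    (ha' : ∀ t, deriv a t = (-2 * (a t) ^ 2 + 2 * (b t) ^ 2 + 2 * c₁ t * c₂ t) * a t)
    (hb' : ∀ t, deriv b t = (-2 * (b t) ^ 2 + 2 * (a t) ^ 2 - 2 * c₁ t * c₂ t) * b t)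
    (hc₁' : ∀ t, deriv c₁ t = (-((c₁ t) ^ 2 + (c₂ t) ^ 2) - 2 * (a t) ^ 2 - 2 * (b t) ^ 2) * c₁ t)
    (hc₂' : ∀ t, deriv c₂ t = (-((c₁ t) ^ 2 + (c₂ t) ^ 2) - 2 * (a t) ^ 2 - 2 * (b t) ^ 2) * c₂ t) :
    ∀ t, deriv (fun s => (a s) ^ 2 + (b s) ^ 2 + (c₁ s) ^ 2 + (c₂ s) ^ 2) t ≤ 0 ∧
      (¬ ((a t) ^ 2 = (b t) ^ 2 ∧ c₁ t = 0 ∧ c₂ t = 0) →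
        deriv (fun s => (a s) ^ 2 + (b s) ^ 2 + (c₁ s) ^ 2 + (c₂ s) ^ 2) t < 0) := by
  intro t
  rw [deriv_sq_add_sq_add_sq_add_sq (ha t) (hb t) (hc₁ t) (hc₂ t), ha' t, hb' t, hc₁' t, hc₂' t]
  have hle := dissipation_le (a t) (b t) (c₁ t) (c₂ t)
  have hnonneg : 0 ≤ 2 * (a t ^ 2 - b t ^ 2) ^ 2 + (c₁ t ^ 2 + c₂ t ^ 2) ^ 2 := by positivity
  refine ⟨by linarith, fun hne => ?_⟩
  have hpos : 0 < 2 * (a t ^ 2 - b t ^ 2) ^ 2 + (c₁ t ^ 2 + c₂ t ^ 2) ^ 2 :=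
    lt_of_not_ge fun h => hne (eq_and_eq_zero_of_two_mul_sq_add_sq_sq_nonpos h)
  linarith
end
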